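/- arXiv:1712.08312 — 6 statements merged into one kernel-verified Lean document; each statement's English description precedes it below -/
import Mathlib

section
/- Let F be a linear ordered field equipped with its order topology, X a completely F-regular space, and A(X,F) an intermediate ring. If I is a proper z°-ideal of A(X,F), then there exists an ideal 𝒫 of closed sets in X such that I = {f ∈ A(X,F) : cl_X(X \ Z(f)) ∈ 𝒫}. -/
open Set

/-- `Pz a` : the intersection of all minimal prime ideals of `R` which contain `a`. -/
def Pz {R : Type*} [CommRing R] (a : R) : Set R :=
  ⋂ P ∈ {P : Ideal R | P ∈ minimalPrimes R ∧ a ∈ P}, (P : Set R)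

/-- A proper ideal `I` is a `z°`-ideal if `Pz a ⊆ I` for every `a ∈ I`. -/
def IsZoIdeal {R : Type*} [CommRing R] (I : Ideal R) : Prop :=
  I ≠ ⊤ ∧ ∀ a ∈ I, Pz a ⊆ (I : Set R)

/-- The zero set `Z(f)` of a continuous function `f`. -/
def ZSet {X F : Type*} [TopologicalSpace X] [TopologicalSpace F] [Zero F]
    (f : C(X, F)) : Set X := {x | f x = 0}

/-- `f` is bounded over `X` (i.e. `f ∈ B(X,F)`). -/
def BddF {X F : Type*} [TopologicalSpace X] [Field F] [LinearOrder F] [IsStrictOrderedRing F] [TopologicalSpace F]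
    (f : C(X, F)) : Prop := ∃ l : F, 0 < l ∧ ∀ x, |f x| ≤ l

/-- `X` is completely `F`-regular: Hausdorff, and points can be separated from closed
sets by bounded `F`-valued continuous functions. -/
def CompletelyFRegular (X F : Type*) [TopologicalSpace X] [Field F] [LinearOrder F] [IsStrictOrderedRing F]
    [TopologicalSpace F] : Prop :=
  T2Space X ∧ ∀ K : Set X, IsClosed K → ∀ x ∉ K, ∃ f : C(X, F),
    BddF f ∧ f x = 0 ∧ ∀ k ∈ K, f k = 1

/-- `A` is an intermediate ring: a subring of `C(X,F)` containing all of `B(X,F)`. -/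
def IsIntermediate {X F : Type*} [TopologicalSpace X] [Field F] [LinearOrder F] [IsStrictOrderedRing F]
    [TopologicalSpace F] [OrderTopology F] (A : Subring C(X, F)) : Prop :=
  ∀ f : C(X, F), BddF f → f ∈ A

/-- An ideal of closed sets in `X`: a nonempty family of closed sets, closed under
finite unions and under passing to closed subsets. -/
def IsIdealOfClosedSets {X : Type*} [TopologicalSpace X] (P : Set (Set X)) : Prop :=
  P.Nonempty ∧ (∀ A ∈ P, IsClosed A) ∧ (∀ A ∈ P, ∀ B ∈ P, A ∪ B ∈ P) ∧
    ∀ C : Set X, IsClosed C → ∀ A ∈ P, C ⊆ A → C ∈ P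

/-- `X` is an almost `P_F`-space: every nonempty zero set has nonempty interior. -/
def AlmostPF (X F : Type*) [TopologicalSpace X] [Field F] [LinearOrder F] [IsStrictOrderedRing F]
    [TopologicalSpace F] : Prop :=
  ∀ f : C(X, F), (ZSet f).Nonempty → (interior (ZSet f)).Nonempty

/-!
If `Q` is a minimal prime of a commutative ring and `g ∈ Q`, then `g * h` is nilpotent for some
`h ∉ Q`. In a ring of continuous functions `g * h = 0` means that the open set `coz h` misses
`coz g`, hence misses `cl coz g`; so every `f` with `cl coz f ⊆ cl coz g` also satisfies
`f * h = 0 ∈ Q`, whence `f ∈ Q`. Thus `f ∈ P_g`, and a z°-ideal containing `g` contains `f`.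
The required ideal of closed sets consists of the closed sets contained in `cl coz g` for some
`g ∈ I`; it is closed under unions since `coz (a² + b²) = coz a ∪ coz b`.
-/

open Function

section MinimalPrimes

variable {R : Type*} [CommRing R]

theorem Ideal.exists_notMem_isNilpotent_mul_of_mem_minimalPrimes {p : Ideal R}
    (hp : p ∈ minimalPrimes R) {a : R} (ha : a ∈ p) : ∃ b ∉ p, IsNilpotent (a * b) := by
  have : p.IsPrime := hp.1.1
  -- `p` becomes the maximal ideal of `R_p`, which is the nilradical since `p` is minimal.
  have hmax : algebraMap R (Localization.AtPrime p) a ∈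
      IsLocalRing.maximalIdeal (Localization.AtPrime p) :=
    (IsLocalization.AtPrime.to_map_mem_maximal_iff _ p a).mpr ha
  have hrad := IsLocalization.AtPrime.radical_map_of_mem_minimalPrimes
    (A := Localization.AtPrime p) p ⊥ hp
  rw [Ideal.map_bot, IsLocalization.AtPrime.map_eq_maximalIdeal] at hrad
  obtain ⟨n, hn⟩ := hrad ▸ hmax
  rw [Ideal.mem_bot, ← map_pow, IsLocalization.map_eq_zero_iff p.primeCompl] at hn
  obtain ⟨⟨s, hs⟩, hsa⟩ := hn
  refine ⟨s, hs, n + 1, ?_⟩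
  calc (a * s) ^ (n + 1) = (s * a ^ n) * (a * s ^ n) := by ring
    _ = 0 := by rw [show s * a ^ n = 0 from hsa, zero_mul]

variable [IsReduced R]

theorem Ideal.mem_of_mem_minimalPrimes_of_forall_mul_eq_zero {p : Ideal R}
    (hp : p ∈ minimalPrimes R) {a b : R} (hb : b ∈ p) (hab : ∀ c, b * c = 0 → a * c = 0) :
    a ∈ p := by
  obtain ⟨c, hc, hbc⟩ := Ideal.exists_notMem_isNilpotent_mul_of_mem_minimalPrimes hp hb
  have hac : a * c ∈ p := by
    rw [hab c hbc.eq_zero]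
    exact p.zero_mem
  exact (hp.1.1.mem_or_mem hac).resolve_right hc

theorem mem_Pz_of_forall_mul_eq_zero {a b : R} (hab : ∀ c, b * c = 0 → a * c = 0) :
    a ∈ Pz b :=
  mem_iInter₂.mpr fun _ hp => Ideal.mem_of_mem_minimalPrimes_of_forall_mul_eq_zero hp.1 hp.2 hab

theorem IsZoIdeal.mem_of_forall_mul_eq_zero {I : Ideal R} (hI : IsZoIdeal I) {a b : R}
    (hb : b ∈ I) (hab : ∀ c, b * c = 0 → a * c = 0) : a ∈ I :=
  hI.2 b hb (mem_Pz_of_forall_mul_eq_zero hab)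

end MinimalPrimes

instance Subring.instIsReduced {R : Type*} [Ring R] [IsReduced R] (S : Subring R) :
    IsReduced S :=
  isReduced_of_injective S.subtype Subtype.val_injective

namespace ContinuousMap

variable {X F : Type*} [TopologicalSpace X] [TopologicalSpace F]

instance instIsReduced [Semiring F] [IsTopologicalSemiring F] [IsReduced F] :
    IsReduced C(X, F) :=
  isReduced_of_injective (coeFnRingHom : C(X, F) →+* X → F) DFunLike.coe_injective

theorem mul_eq_zero_iff_disjoint_support [Semiring F] [IsTopologicalSemiring F]
    [NoZeroDivisors F] {f g : C(X, F)} : f * g = 0 ↔ Disjoint (support f) (support g) := by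
  rw [Set.disjoint_iff_inter_eq_empty, ← support_mul, support_eq_empty_iff, ← DFunLike.coe_fn_eq]
  rfl

theorem mul_eq_zero_of_closure_support_subset [Semiring F] [IsTopologicalSemiring F]
    [NoZeroDivisors F] [T1Space F] {f g h : C(X, F)}
    (hfg : closure (support f) ⊆ closure (support g)) (hgh : g * h = 0) : f * h = 0 := by
  rw [mul_eq_zero_iff_disjoint_support] at hgh ⊢
  exact (hgh.closure_left h.continuous.isOpen_support).mono_left (subset_closure.trans hfg)

theorem support_mul_self_add_mul_self [Ring F] [LinearOrder F] [IsStrictOrderedRing F]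
    [IsTopologicalRing F] (a b : C(X, F)) : support ⇑(a * a + b * b) = support a ∪ support b := by
  ext x
  simp only [mem_support, Set.mem_union, add_apply, mul_apply, ne_eq,
    mul_self_add_mul_self_eq_zero, not_and_or]

end ContinuousMap

section IntermediateRings

variable {X F : Type*} [TopologicalSpace X] [CommRing F] [TopologicalSpace F] [IsTopologicalRing F]
  {A : Subring C(X, F)}

theorem IsZoIdeal.mem_of_closure_support_subset [NoZeroDivisors F] [T1Space F] {I : Ideal A}
    (hI : IsZoIdeal I) {f g : A} (hg : g ∈ I)
    (hfg : closure (support (f : C(X, F))) ⊆ closure (support (g : C(X, F)))) : f ∈ I :=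
  hI.mem_of_forall_mul_eq_zero hg fun _ hc =>
    Subtype.ext (ContinuousMap.mul_eq_zero_of_closure_support_subset hfg (congrArg Subtype.val hc))

def Ideal.closedSetsInClosureSupport (I : Ideal A) : Set (Set X) :=
  {C | IsClosed C ∧ ∃ g ∈ I, C ⊆ closure (support (g : C(X, F)))}

theorem Ideal.isIdealOfClosedSets_closedSetsInClosureSupport [LinearOrder F]
    [IsStrictOrderedRing F] (I : Ideal A) : IsIdealOfClosedSets I.closedSetsInClosureSupport := by
  refine ⟨⟨∅, isClosed_empty, 0, I.zero_mem, Set.empty_subset _⟩, fun C hC => hC.1, ?_, ?_⟩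
  · rintro C ⟨hC, a, ha, hCa⟩ D ⟨hD, b, hb, hDb⟩
    refine ⟨hC.union hD, a * a + b * b, I.add_mem (I.mul_mem_left a ha) (I.mul_mem_left b hb), ?_⟩
    rw [Subring.coe_add, Subring.coe_mul, Subring.coe_mul,
      ContinuousMap.support_mul_self_add_mul_self, closure_union]
    exact Set.union_subset_union hCa hDb
  · rintro C hC D ⟨-, g, hg, hDg⟩ hCD
    exact ⟨hC, g, hg, hCD.trans hDg⟩

end IntermediateRings

theorem stmt3_general {X F : Type*} [TopologicalSpace X] [Field F] [LinearOrder F] [IsStrictOrderedRing F]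
    [TopologicalSpace F] [OrderTopology F]
    (A : Subring C(X, F))
    (I : Ideal A) (hI : IsZoIdeal I) :
    ∃ P : Set (Set X), IsIdealOfClosedSets P ∧
      (I : Set A) = {f : A | closure ((ZSet (f : C(X, F)))ᶜ) ∈ P} := by
  refine ⟨I.closedSetsInClosureSupport, I.isIdealOfClosedSets_closedSetsInClosureSupport, ?_⟩
  ext f
  -- `(ZSet f)ᶜ` is definitionally `support f`
  exact ⟨fun hf => ⟨isClosed_closure, f, hf, subset_rfl⟩,
    fun ⟨_, _, hg, hfg⟩ => hI.mem_of_closure_support_subset hg hfg⟩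

/-- Every proper z°-ideal of an intermediate ring A(X,F) arises from an ideal of
closed sets in X. -/
theorem stmt3 {X F : Type*} [TopologicalSpace X] [Field F] [LinearOrder F] [IsStrictOrderedRing F]
    [TopologicalSpace F] [OrderTopology F]
    (hX : CompletelyFRegular X F)
    (A : Subring C(X, F)) (hA : IsIntermediate A)
    (I : Ideal A) (hI : IsZoIdeal I) :
    ∃ P : Set (Set X), IsIdealOfClosedSets P ∧
      (I : Set A) = {f : A | closure ((ZSet (f : C(X, F)))ᶜ) ∈ P} :=
  stmt3_general A I hI
end

section
/- Let F be a linear ordered field equipped with its order topology and X a completely F-regular space such that C(X,F) is von Neumann regular (i.e., X is a P_F-space). Then for an intermediate ring A(X,F), the following are equivalent: (1) A(X,F) = C(X,F); (2) every proper ideal of A(X,F) is a z°-ideal. -/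
/-!
A von Neumann regular ring has only minimal primes and only radical ideals, so there
`Pz a` is the radical of `(a)` and lies in every ideal containing `a`.

Conversely, `Pz a` is the whole ring when `a` is a non-zero-divisor, since minimal primes
consist of zero divisors; so if every proper ideal is a `z°`-ideal, every non-zero-divisor
is a unit. For `f ∈ C(X, F)` the function `h = (1 + f²)⁻¹` is bounded and nowhere zero, hence
a unit of `A`, and `f = (f * h) * h⁻¹ ∈ A` because `f * h` is bounded too.
-/

open Set

section VonNeumannRegular

variable {R : Type*} [CommRing R]

theorem Ideal.IsPrime.mem_minimalPrimes_of_regular (hR : ∀ a : R, ∃ b, a = a * b * a)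
    {P : Ideal R} (hP : P.IsPrime) : P ∈ minimalPrimes R := by
  refine ⟨⟨hP, bot_le⟩, fun Q ⟨hQ, _⟩ hQP y hyP => ?_⟩
  obtain ⟨b, hb⟩ := hR y
  have hzero : y * (1 - b * y) = 0 := by linear_combination hb
  refine (hQ.mem_or_mem (hzero ▸ Q.zero_mem)).resolve_right fun h => hP.ne_top ?_
  exact (Ideal.eq_top_iff_one P).mpr (by simpa using P.add_mem (hQP h) (P.mul_mem_left b hyP))

theorem Ideal.isRadical_of_regular (hR : ∀ a : R, ∃ b, a = a * b * a) (I : Ideal R) :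
    I.IsRadical := by
  refine (Ideal.isRadical_iff_pow_one_lt 2 one_lt_two).mpr fun r hr => ?_
  obtain ⟨b, hb⟩ := hR r
  rw [hb, show r * b * r = b * r ^ 2 by ring]
  exact I.mul_mem_left b hr

theorem Pz_subset_radical_span_of_regular (hR : ∀ a : R, ∃ b, a = a * b * a) (a : R) :
    Pz a ⊆ (Ideal.span {a}).radical := by
  intro x hx
  rw [SetLike.mem_coe, Ideal.radical_eq_sInf, Submodule.mem_sInf]
  rintro J ⟨haJ, hJ⟩
  exact mem_iInter₂.mp hx J
    ⟨hJ.mem_minimalPrimes_of_regular hR, haJ (Ideal.mem_span_singleton_self a)⟩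

theorem Pz_subset_of_regular (hR : ∀ a : R, ∃ b, a = a * b * a) {I : Ideal R} {a : R}
    (ha : a ∈ I) : Pz a ⊆ I :=
  (Pz_subset_radical_span_of_regular hR a).trans <|
    (Ideal.isRadical_of_regular hR I).radical_le_iff.mpr ((Ideal.span_singleton_le_iff_mem I).mpr ha)

end VonNeumannRegular

section NonZeroDivisors

variable {R : Type*} [CommRing R]

theorem Pz_eq_univ_of_mem_nonZeroDivisors {a : R} (ha : a ∈ nonZeroDivisors R) :
    Pz a = univ :=
  eq_univ_of_forall fun _ => mem_iInter₂.mpr fun _ ⟨hP, haP⟩ =>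
    absurd ha (notMem_nonZeroDivisors_of_mem_mem_minimalPrimes haP hP)

theorem isUnit_of_mem_nonZeroDivisors_of_forall_Pz_subset
    (hzo : ∀ I : Ideal R, I ≠ ⊤ → ∀ a ∈ I, Pz a ⊆ (I : Set R))
    {a : R} (ha : a ∈ nonZeroDivisors R) : IsUnit a := by
  rw [← Ideal.span_singleton_eq_top]
  by_contra hne
  have h1 : (1 : R) ∈ Pz a := by simp [Pz_eq_univ_of_mem_nonZeroDivisors ha]
  exact hne ((Ideal.eq_top_iff_one _).mpr
    (hzo _ hne a (Ideal.mem_span_singleton_self a) h1))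

end NonZeroDivisors

theorem Subring.mem_of_mul_mem_of_isUnit {S : Type*} [CommRing S] {A : Subring S} {f h : S}
    (hh : h ∈ A) (hfh : f * h ∈ A) (hu : IsUnit (⟨h, hh⟩ : A)) : f ∈ A := by
  obtain ⟨v, hv⟩ := hu.exists_right_inv
  have hhv : h * v = 1 := congrArg Subtype.val hv
  rw [← mul_one f, ← hhv, ← mul_assoc]
  exact A.mul_mem hfh v.2

theorem Subring.mk_mem_nonZeroDivisors_of_forall_ne_zero {X R : Type*} [TopologicalSpace X]
    [TopologicalSpace R] [CommRing R] [IsTopologicalRing R] [NoZeroDivisors R]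
    {A : Subring C(X, R)} {h : C(X, R)} (hA : h ∈ A) (hh : ∀ x, h x ≠ 0) :
    (⟨h, hA⟩ : A) ∈ nonZeroDivisors A := by
  refine mem_nonZeroDivisors_iff_right.mpr fun t ht => Subtype.ext <| ContinuousMap.ext fun x => ?_
  have htx : t.1 x * h x = 0 := congrArg (fun u : A => u.1 x) ht
  exact (mul_eq_zero.mp htx).resolve_right (hh x)

lemma one_add_sq_pos {F : Type*} [Ring F] [LinearOrder F] [IsStrictOrderedRing F] (t : F) :
    0 < 1 + t ^ 2 :=
  add_pos_of_pos_of_nonneg one_pos (sq_nonneg t)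

section InvOneAddSq

variable {X F : Type*} [TopologicalSpace X] [Field F] [LinearOrder F] [IsStrictOrderedRing F]
  [TopologicalSpace F] [OrderTopology F]

def invOneAddSq (f : C(X, F)) : C(X, F) :=
  ⟨fun x => (1 + f x ^ 2)⁻¹,
    (continuous_const.add (f.continuous.pow 2)).inv₀ fun x => (one_add_sq_pos (f x)).ne'⟩

lemma invOneAddSq_apply (f : C(X, F)) (x : X) : invOneAddSq f x = (1 + f x ^ 2)⁻¹ := rfl

lemma invOneAddSq_apply_ne_zero (f : C(X, F)) (x : X) : invOneAddSq f x ≠ 0 :=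
  inv_ne_zero (one_add_sq_pos (f x)).ne'

lemma bddF_invOneAddSq (f : C(X, F)) : BddF (invOneAddSq f) := by
  refine ⟨1, one_pos, fun x => ?_⟩
  rw [invOneAddSq_apply, abs_of_pos (inv_pos.mpr (one_add_sq_pos _))]
  exact inv_le_one_of_one_le₀ (le_add_of_nonneg_right (sq_nonneg _))

lemma bddF_mul_invOneAddSq (f : C(X, F)) : BddF (f * invOneAddSq f) := by
  refine ⟨1, one_pos, fun x => ?_⟩
  rw [ContinuousMap.mul_apply, invOneAddSq_apply, ← div_eq_mul_inv, abs_div,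
    abs_of_pos (one_add_sq_pos (f x)), div_le_one (one_add_sq_pos _)]
  nlinarith [abs_nonneg (f x), sq_abs (f x)]

end InvOneAddSq

theorem stmt8_general {X F : Type*} [TopologicalSpace X] [Field F] [LinearOrder F] [IsStrictOrderedRing F]
    [TopologicalSpace F] [OrderTopology F]
    (hPF : ∀ f : C(X, F), ∃ g : C(X, F), f = f * g * f)
    (A : Subring C(X, F)) (hA : IsIntermediate A) :
    A = ⊤ ↔ ∀ I : Ideal A, I ≠ ⊤ → ∀ a ∈ I, Pz a ⊆ (I : Set A) := by
  constructor
  · rintro rfl I - a ha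
    refine Pz_subset_of_regular (fun c => ?_) ha
    obtain ⟨g, hg⟩ := hPF c
    exact ⟨⟨g, Subring.mem_top g⟩, Subtype.ext hg⟩
  · intro hzo
    refine (Subring.eq_top_iff' A).mpr fun f => ?_
    have hh : invOneAddSq f ∈ A := hA _ (bddF_invOneAddSq f)
    exact Subring.mem_of_mul_mem_of_isUnit hh (hA _ (bddF_mul_invOneAddSq f)) <|
      isUnit_of_mem_nonZeroDivisors_of_forall_Pz_subset hzo <|
        Subring.mk_mem_nonZeroDivisors_of_forall_ne_zero hh (invOneAddSq_apply_ne_zero f)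

/-- For a P_F-space X and an intermediate ring A(X,F): A(X,F) = C(X,F) iff
every proper ideal of A(X,F) is a z°-ideal. -/
theorem stmt8 {X F : Type*} [TopologicalSpace X] [Field F] [LinearOrder F] [IsStrictOrderedRing F]
    [TopologicalSpace F] [OrderTopology F]
    (hX : CompletelyFRegular X F)
    (hPF : ∀ f : C(X, F), ∃ g : C(X, F), f = f * g * f)
    (A : Subring C(X, F)) (hA : IsIntermediate A) :
    A = ⊤ ↔ ∀ I : Ideal A, I ≠ ⊤ → ∀ a ∈ I, Pz a ⊆ (I : Set A) :=
  stmt8_general hPF A hA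
end

section
/- Let F be a linear ordered field equipped with its order topology such that F is Cauchy complete and has cofinality ω₀, and let X be a completely F-regular space. If V is a Gδ subset of X and S is a compact subset of X with S ⊆ V, then there exists f ∈ C(X,F) such that S ⊆ Z(f) ⊆ V. -/
open Set

/-- F is Cauchy complete: every Cauchy sequence in F converges in the order topology. -/
def CauchyCompleteField (F : Type*) [Field F] [LinearOrder F] [IsStrictOrderedRing F] [TopologicalSpace F] : Prop :=
  ∀ a : ℕ → F, (∀ ε : F, 0 < ε → ∃ N : ℕ, ∀ m ≥ N, ∀ n ≥ N, |a m - a n| < ε) →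
    ∃ l : F, Filter.Tendsto a Filter.atTop (nhds l)

/-- F has cofinality ω₀: a countable sequence is cofinal in F. -/
def CofinalityOmega (F : Type*) [Preorder F] : Prop :=
  ∃ s : ℕ → F, ∀ x : F, ∃ n : ℕ, x ≤ s n

/-! Write the Gδ set as `⋂ n, U n`. Compactness and complete `F`-regularity give continuous
`g n : X → [0, 1]` vanishing on `S` and equal to `1` off `U n`. Since `F` has cofinality `ω₀` there
is a strictly decreasing null sequence `e n`, and the series `∑ (e n - e (n + 1)) g n` converges
uniformly by Cauchy completeness; its sum is continuous, and since all weights are positive it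
vanishes exactly where every `g n` does, i.e. on a set between `S` and `⋂ n, U n`. -/

open Filter Topology

@[simp]
lemma mem_ZSet {X F : Type*} [TopologicalSpace X] [TopologicalSpace F] [Zero F] {f : C(X, F)}
    {x : X} : x ∈ ZSet f ↔ f x = 0 := Iff.rfl

lemma sum_Ico_sub_succ_mul_mem_Icc {R : Type*} [Ring R] [LinearOrder R] [IsOrderedRing R]
    {e w : ℕ → R} (he : Antitone e) (hw : ∀ k, w k ∈ Icc 0 1)
    {N M : ℕ} (h : N ≤ M) :
    ∑ k ∈ Finset.Ico N M, (e k - e (k + 1)) * w k ∈ Icc 0 (e N - e M) := by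
  have hc (k : ℕ) : 0 ≤ e k - e (k + 1) := sub_nonneg.2 (he k.le_succ)
  refine ⟨Finset.sum_nonneg fun k _ => mul_nonneg (hc k) (hw k).1, ?_⟩
  calc ∑ k ∈ Finset.Ico N M, (e k - e (k + 1)) * w k
      ≤ ∑ k ∈ Finset.Ico N M, (e k - e (k + 1)) :=
        Finset.sum_le_sum fun k _ => mul_le_of_le_one_right (hc k) (hw k).2
    _ = e N - e M := by
        rw [Finset.sum_Ico_eq_sub _ h, Finset.sum_range_sub', Finset.sum_range_sub']
        abel

section OrderedField

variable {X F : Type*} [TopologicalSpace X] [Field F] [LinearOrder F] [IsStrictOrderedRing F]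
  [TopologicalSpace F] [OrderTopology F]

lemma CompletelyFRegular.exists_eventuallyEq_zero_eqOn_one (hX : CompletelyFRegular X F)
    {U : Set X} (hU : IsOpen U) {x : X} (hx : x ∈ U) :
    ∃ g : C(X, F), (∀ y, g y ∈ Icc 0 1) ∧ (∀ᶠ y in 𝓝 x, g y = 0) ∧ EqOn g 1 Uᶜ := by
  obtain ⟨f, -, hfx, hfU⟩ := hX.2 Uᶜ hU.isClosed_compl x (not_not_intro hx)
  -- clamping `2|f| - 1` to `[0, 1]` makes the function vanish wherever `|f| < 1/2`
  refine ⟨⟨fun y => min (max (2 * |f y| - 1) 0) 1, by fun_prop⟩,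
    fun y => ⟨le_min (le_max_right _ _) zero_le_one, min_le_right _ _⟩, ?_, fun y hy => ?_⟩
  · have hf : Tendsto (fun y => |f y|) (𝓝 x) (𝓝 0) := by
      simpa [hfx] using (f.continuous.abs.tendsto x)
    filter_upwards [hf.eventually_lt_const (by norm_num : (0 : F) < 1 / 2)] with y hy
    simp [max_eq_right (by linarith : 2 * |f y| - 1 ≤ 0)]
  · simp [hfU y hy]
    norm_num

lemma CompletelyFRegular.exists_eqOn_zero_eqOn_one (hX : CompletelyFRegular X F)
    {S U : Set X} (hS : IsCompact S) (hU : IsOpen U) (hSU : S ⊆ U) :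
    ∃ g : C(X, F), (∀ y, g y ∈ Icc 0 1) ∧ EqOn g 0 S ∧ EqOn g 1 Uᶜ := by
  choose g hg01 hg0 hg1 using fun x (hx : x ∈ S) =>
    hX.exists_eventuallyEq_zero_eqOn_one hU (hSU hx)
  obtain ⟨t, ht⟩ := hS.elim_nhds_subcover' (fun x hx => {y | g x hx y = 0}) hg0
  refine ⟨∏ i ∈ t, g i i.2, fun y => ?_, fun y hy => ?_, fun y hy => ?_⟩
  · rw [ContinuousMap.prod_apply]
    exact ⟨Finset.prod_nonneg fun i _ => (hg01 i i.2 y).1,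
      Finset.prod_le_one (fun i _ => (hg01 i i.2 y).1) fun i _ => (hg01 i i.2 y).2⟩
  · obtain ⟨i, hi, hiy⟩ := mem_iUnion₂.1 (ht hy)
    rw [ContinuousMap.prod_apply]
    exact Finset.prod_eq_zero hi hiy
  · rw [ContinuousMap.prod_apply]
    exact Finset.prod_eq_one fun i _ => hg1 i i.2 hy

lemma CofinalityOmega.exists_strictAnti_tendsto_zero (hF : CofinalityOmega F) :
    ∃ e : ℕ → F, StrictAnti e ∧ (∀ n, 0 < e n) ∧ Tendsto e atTop (𝓝 0) := by
  obtain ⟨s, hs⟩ := hF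
  set t : ℕ → F := fun n => ∑ k ∈ Finset.range (n + 1), (|s k| + 1)
  have ht_ge (n : ℕ) : |s n| + 1 ≤ t n :=
    Finset.single_le_sum (f := fun k => |s k| + 1) (fun k _ => by positivity)
      (Finset.self_mem_range_succ n)
  have ht_pos (n : ℕ) : 0 < t n := (by positivity : 0 < |s n| + 1).trans_le (ht_ge n)
  have ht_mono : StrictMono t := strictMono_nat_of_lt_succ fun n => by
    simp only [t, Finset.sum_range_succ _ (n + 1)]
    linarith [abs_nonneg (s (n + 1))]
  have ht_top : Tendsto t atTop atTop := tendsto_atTop_atTop.2 fun b => by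
    obtain ⟨n, hn⟩ := hs b
    exact ⟨n, fun m hm => hn.trans <| (le_abs_self _).trans <| by
      linarith [ht_ge n, ht_mono.monotone hm]⟩
  exact ⟨t⁻¹, fun m n h => inv_strictAnti₀ (ht_pos m) (ht_mono h),
    fun n => inv_pos.2 (ht_pos n), ht_top.inv_tendsto_atTop⟩

lemma CauchyCompleteField.exists_tendsto_abs_sub_le (hF : CauchyCompleteField F)
    {a e : ℕ → F} (he : Antitone e) (he0 : Tendsto e atTop (𝓝 0))
    (ha : ∀ n m, n ≤ m → |a m - a n| ≤ e n) :
    ∃ l, Tendsto a atTop (𝓝 l) ∧ ∀ n, |l - a n| ≤ e n := by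
  have hcauchy (N m n : ℕ) (hm : N ≤ m) (hn : N ≤ n) : |a m - a n| ≤ e N := by
    rcases le_total n m with h | h
    · exact (ha n m h).trans (he hn)
    · exact abs_sub_comm (a m) (a n) ▸ (ha m n h).trans (he hm)
  obtain ⟨l, hl⟩ := hF a fun ε hε => by
    obtain ⟨N, hN⟩ := (he0.eventually_lt_const hε).exists
    exact ⟨N, fun m hm n hn => (hcauchy N m n hm hn).trans_lt hN⟩
  refine ⟨l, hl, fun n => le_of_tendsto ((hl.sub_const (a n)).abs) ?_⟩
  filter_upwards [eventually_ge_atTop n] with m hm using ha n m hm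

lemma continuous_of_forall_exists_continuous_abs_sub_le {L : X → F}
    (h : ∀ ε > 0, ∃ g : X → F, Continuous g ∧ ∀ x, |L x - g x| ≤ ε) : Continuous L := by
  refine continuous_iff_continuousAt.2 fun x => ?_
  refine (nhds_basis_abs_sub_lt (L x)).tendsto_right_iff.2 fun ε hε => ?_
  obtain ⟨g, hg, hLg⟩ := h (ε / 3) (by positivity)
  have hgx : ∀ᶠ y in 𝓝 x, |g y - g x| < ε / 3 :=
    (nhds_basis_abs_sub_lt (g x)).tendsto_right_iff.1 (hg.tendsto x) _ (by positivity)
  filter_upwards [hgx] with y hy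
  calc |L y - L x| = |(L y - g y) + (g y - g x) - (L x - g x)| := by congr 1; ring
    _ ≤ |L y - g y| + |g y - g x| + |L x - g x| :=
      (abs_sub _ _).trans (by gcongr; exact abs_add_le _ _)
    _ < ε := by linarith [hLg y, hLg x]

lemma exists_ZSet_eq_iInter (hcc : CauchyCompleteField F) (hcf : CofinalityOmega F)
    (f : ℕ → C(X, F)) (hf : ∀ n x, f n x ∈ Icc 0 1) :
    ∃ L : C(X, F), ZSet L = ⋂ n, ZSet (f n) := by
  obtain ⟨e, he, he_pos, he0⟩ := hcf.exists_strictAnti_tendsto_zero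
  set c : ℕ → F := fun k => e k - e (k + 1)
  have hc (k : ℕ) : 0 < c k := sub_pos.2 (he k.lt_succ_self)
  set A : ℕ → X → F := fun N x => ∑ k ∈ Finset.range N, c k * f k x
  have hA (x : X) {N M : ℕ} (h : N ≤ M) : A M x - A N x ∈ Icc 0 (e N - e M) := by
    simpa only [A, ← Finset.sum_Ico_eq_sub _ h] using
      sum_Ico_sub_succ_mul_mem_Icc he.antitone (fun k => hf k x) h
  choose L hL hLA using fun x => hcc.exists_tendsto_abs_sub_le (a := fun N => A N x)
    he.antitone he0 fun N M h => by
      rw [abs_of_nonneg (hA x h).1]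
      linarith [(hA x h).2, he_pos M]
  have hL_cont : Continuous L := continuous_of_forall_exists_continuous_abs_sub_le fun ε hε => by
    obtain ⟨N, hN⟩ := (he0.eventually_lt_const hε).exists
    exact ⟨A N, continuous_finsetSum _ fun k _ => continuous_const.mul (f k).continuous,
      fun x => (hLA x N).trans hN.le⟩
  refine ⟨⟨L, hL_cont⟩, Set.ext fun x => ?_⟩
  simp only [mem_ZSet, mem_iInter, ContinuousMap.coe_mk]
  constructor
  · -- each term `c k * f k x` is nonnegative and bounded by the limit `L x`
    intro hx k
    have hle : c k * f k x ≤ L x := ge_of_tendsto (hL x) <| by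
      filter_upwards [eventually_gt_atTop k] with N hN using
        Finset.single_le_sum (f := fun k => c k * f k x)
          (fun k _ => mul_nonneg (hc k).le (hf k x).1) (Finset.mem_range.2 hN)
    rw [hx] at hle
    exact le_antisymm (nonpos_of_mul_nonpos_right hle (hc k)) (hf k x).1
  · intro hx
    refine tendsto_nhds_unique (hL x) ?_
    simp only [A, hx, mul_zero, Finset.sum_const_zero, tendsto_const_nhds]

end OrderedField

/-- For Cauchy complete F of cofinality ω₀ and completely F-regular X: a compact set
contained in a Gδ set can be separated by a zero set. -/
theorem stmt12 {X F : Type*} [TopologicalSpace X] [Field F] [LinearOrder F] [IsStrictOrderedRing F]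
    [TopologicalSpace F] [OrderTopology F]
    (hcc : CauchyCompleteField F) (hcf : CofinalityOmega F)
    (hX : CompletelyFRegular X F)
    (V : Set X) (hV : IsGδ V) (S : Set X) (hS : IsCompact S) (hSV : S ⊆ V) :
    ∃ f : C(X, F), S ⊆ ZSet f ∧ ZSet f ⊆ V := by
  obtain ⟨U, hU, rfl⟩ := hV.eq_iInter_nat
  choose g hg01 hgS hgU using fun n =>
    hX.exists_eqOn_zero_eqOn_one hS (hU n) (hSV.trans (iInter_subset U n))
  obtain ⟨L, hL⟩ := exists_ZSet_eq_iInter hcc hcf g hg01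
  refine ⟨L, hL ▸ subset_iInter fun n x hx => hgS n hx, hL ▸ iInter_mono fun n x hx => ?_⟩
  by_contra hxU
  simp [hgU n hxU] at hx
end

section
/- Let X be a completely regular Hausdorff (Tychonoff) space and A(X) a subring of C(X) containing C*(X). Then X is an almost P-space (every nonempty zero set of a continuous real-valued function on X has nonempty interior in X) if and only if for every p ∈ X, the fixed maximal ideal {f ∈ A(X) : f(p) = 0} is a z°-ideal of A(X). -/
open Set

set_option synthInstance.maxHeartbeats 400000 in
/-- The fixed maximal ideal M^p_A of all f in A(X,F) vanishing at p. -/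
def fixedMaxIdeal {X F : Type*} [TopologicalSpace X] [Field F] [LinearOrder F] [IsStrictOrderedRing F]
    [TopologicalSpace F] [OrderTopology F] (A : Subring C(X, F)) (p : X) :
    Ideal A where
  carrier := {f : A | (f : C(X, F)) p = 0}
  zero_mem' := by simp
  add_mem' := by
    intro a b ha hb
    simp only [Set.mem_setOf_eq] at *
    push_cast
    simp [ha, hb]
  smul_mem' := by
    intro c x hx
    simp only [Set.mem_setOf_eq, smul_eq_mul] at *
    push_cast
    simp [hx]

/-!
If `X` is almost `P` and `f p = 0`, then `p` lies in the closure of the interior of `Z(f)`: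
for a neighbourhood `U` of `p` and `g` vanishing at `p` and equal to `1` off `U`, the zero set
`Z(f² + g²) ⊆ Z(f) ∩ U` contains `p`, so has nonempty interior. Since `A` is reduced, every
`b ∈ P_a` annihilates the annihilator of `a`; bounded bump functions supported in the interior
of `Z(a)` lie in that annihilator and force `b` to vanish there, hence at `p`.

Conversely, if `Z(f) ∋ p` has empty interior, the bounded function `min(|f|, 1) ∈ M_p` is a
non-zero-divisor of `A`, so it lies in no minimal prime; then `P_a = A ⊄ M_p`.
-/

section MinimalPrimes

variable {R : Type*} [CommRing R]

theorem mem_Pz_iff {a b : R} : b ∈ Pz a ↔ ∀ P ∈ minimalPrimes R, a ∈ P → b ∈ P := by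
  simp [Pz]

/-- A minimal prime contains `b * c` through `b` if it contains `a`, and through `c` otherwise;
in a reduced ring the minimal primes meet in `0`. -/
theorem mul_eq_zero_of_mem_Pz [IsReduced R] {a b c : R} (hb : b ∈ Pz a) (hc : c * a = 0) :
    b * c = 0 := by
  have hbc : b * c ∈ sInf (Ideal.minimalPrimes (⊥ : Ideal R)) := by
    refine Submodule.mem_sInf.mpr fun P hP => ?_
    have hPrime := hP.1.1
    by_cases haP : a ∈ P
    · exact Ideal.mul_mem_right c P (mem_Pz_iff.mp hb P hP haP)
    · refine Ideal.mul_mem_left P b ((hPrime.mem_or_mem ?_).resolve_right haP)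
      rw [hc]
      exact P.zero_mem
  rw [Ideal.sInf_minimalPrimes] at hbc
  obtain ⟨n, hn⟩ := hbc
  exact IsReduced.eq_zero _ ⟨n, by simpa using hn⟩

theorem IsZoIdeal.notMem_nonZeroDivisors {I : Ideal R} (hI : IsZoIdeal I) {a : R} (ha : a ∈ I) :
    a ∉ nonZeroDivisors R := fun hreg =>
  hI.1 <| (Ideal.eq_top_iff_one I).mpr <|
    hI.2 a ha (by rw [Pz_eq_univ_of_mem_nonZeroDivisors hreg]; trivial)

end MinimalPrimes

instance {R : Type*} [Ring R] [IsReduced R] (A : Subring R) : IsReduced A :=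
  isReduced_of_injective A.subtype Subtype.val_injective

instance {X R : Type*} [TopologicalSpace X] [Semiring R] [TopologicalSpace R]
    [IsTopologicalSemiring R] [IsReduced R] : IsReduced C(X, R) :=
  isReduced_of_injective (ContinuousMap.coeFnRingHom (α := X) (β := R)) DFunLike.coe_injective

section ZeroSets

variable {X : Type*} [TopologicalSpace X]

theorem isClosed_zSet {F : Type*} [TopologicalSpace F] [T2Space F] [Zero F] (f : C(X, F)) :
    IsClosed (ZSet f) :=
  isClosed_eq f.continuous continuous_const

theorem zSet_mul_self_add_mul_self (f g : C(X, ℝ)) : ZSet (f * f + g * g) = ZSet f ∩ ZSet g := by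
  ext x
  simp [ZSet, mul_self_add_mul_self_eq_zero]

theorem BddF.of_mem_Icc {f : C(X, ℝ)} {a b : ℝ} (h : ∀ x, f x ∈ Icc a b) : BddF f :=
  ⟨max |a| |b| + 1, by positivity, fun x =>
    (abs_le_max_abs_abs (h x).1 (h x).2).trans (le_add_of_nonneg_right zero_le_one)⟩

theorem exists_bddF_zSet_eq (f : C(X, ℝ)) : ∃ g : C(X, ℝ), BddF g ∧ ZSet g = ZSet f :=
  ⟨⟨fun x => min |f x| 1, by fun_prop⟩,
    BddF.of_mem_Icc fun x => ⟨le_min (abs_nonneg _) zero_le_one, min_le_right _ _⟩,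
    by ext x; change min |f x| 1 = 0 ↔ f x = 0; grind⟩

theorem exists_mem_Icc_eq_zero_eqOn_one [CompletelyRegularSpace X] {K : Set X} (hK : IsClosed K)
    {x : X} (hx : x ∉ K) :
    ∃ f : C(X, ℝ), (∀ y, f y ∈ Icc (0 : ℝ) 1) ∧ f x = 0 ∧ EqOn f 1 K := by
  obtain ⟨f, hf, hfx, hfK⟩ := CompletelyRegularSpace.completely_regular x K hK hx
  exact ⟨⟨fun y => f y, continuous_subtype_val.comp hf⟩, fun y => (f y).2,
    by simp [hfx], fun k hk => by simpa using congrArg Subtype.val (hfK hk)⟩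

theorem AlmostPF.mem_closure_interior_zSet [CompletelyRegularSpace X] (h : AlmostPF X ℝ)
    {f : C(X, ℝ)} {p : X} (hp : f p = 0) : p ∈ closure (interior (ZSet f)) := by
  refine mem_closure_iff.mpr fun U hU hpU => ?_
  obtain ⟨g, -, hgp, hgU⟩ :=
    exists_mem_Icc_eq_zero_eqOn_one hU.isClosed_compl (not_not.mpr hpU)
  have hZ : ZSet (f * f + g * g) ⊆ ZSet f ∩ U := by
    rw [zSet_mul_self_add_mul_self]
    refine fun y hy => ⟨hy.1, by_contra fun hyU => ?_⟩
    simpa [ZSet, hgU hyU] using hy.2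
  obtain ⟨y, hy⟩ := h (f * f + g * g) ⟨p, by simp [ZSet, hp, hgp]⟩
  exact ⟨y, (hZ (interior_subset hy)).2, interior_mono (hZ.trans inter_subset_left) hy⟩

end ZeroSets

section IntermediateRings

variable {X : Type*} [TopologicalSpace X] {A : Subring C(X, ℝ)}

theorem Subring.mul_eq_zero_iff_forall_apply {R : Type*} [Ring R] [TopologicalSpace R]
    [IsTopologicalRing R] {B : Subring C(X, R)} {a b : B} :
    a * b = 0 ↔ ∀ x, (a : C(X, R)) x * (b : C(X, R)) x = 0 := by
  simp [Subtype.ext_iff, ContinuousMap.ext_iff]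

theorem mem_fixedMaxIdeal {p : X} {u : A} : u ∈ fixedMaxIdeal A p ↔ (u : C(X, ℝ)) p = 0 :=
  Iff.rfl

theorem fixedMaxIdeal_ne_top (p : X) : fixedMaxIdeal A p ≠ ⊤ := fun h => by
  simpa [mem_fixedMaxIdeal] using (h ▸ Submodule.mem_top : (1 : A) ∈ fixedMaxIdeal A p)

/-- A nonzero `c` has an open cozero set, on which `a` must vanish when `c * a = 0`. -/
theorem mem_nonZeroDivisors_of_interior_zSet_eq_empty {a : A}
    (ha : interior (ZSet (a : C(X, ℝ))) = ∅) : a ∈ nonZeroDivisors A := by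
  refine mem_nonZeroDivisors_iff_right.mpr fun c hca => ?_
  ext x
  by_contra hcx
  have hsub : {y | (c : C(X, ℝ)) y ≠ 0} ⊆ ZSet (a : C(X, ℝ)) := fun y hy =>
    (mul_eq_zero.mp (Subring.mul_eq_zero_iff_forall_apply.mp hca y)).resolve_left hy
  have := interior_maximal hsub (isOpen_ne_fun (c : C(X, ℝ)).continuous continuous_const) hcx
  rwa [ha] at this

theorem IsIntermediate.closure_interior_zSet_subset [CompletelyRegularSpace X]
    (hA : IsIntermediate A) {a b : A} (hab : ∀ c : A, c * a = 0 → b * c = 0) :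
    closure (interior (ZSet (a : C(X, ℝ)))) ⊆ ZSet (b : C(X, ℝ)) := by
  refine (isClosed_zSet _).closure_subset_iff.mpr fun x hx => ?_
  obtain ⟨f, hf, hfx, hfK⟩ :=
    exists_mem_Icc_eq_zero_eqOn_one isOpen_interior.isClosed_compl (not_not.mpr hx)
  let c : A := ⟨1 - f, hA _ (BddF.of_mem_Icc (a := 0) (b := 1) fun y => by
    simpa [and_comm] using hf y)⟩
  have hca : c * a = 0 := Subring.mul_eq_zero_iff_forall_apply.mpr fun y => by
    by_cases hy : y ∈ interior (ZSet (a : C(X, ℝ)))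
    · have hay : y ∈ ZSet (a : C(X, ℝ)) := interior_subset hy
      simp [show (a : C(X, ℝ)) y = 0 from hay]
    · simp [c, hfK hy]
  show (b : C(X, ℝ)) x = 0
  simpa [c, hfx] using Subring.mul_eq_zero_iff_forall_apply.mp (hab c hca) x

end IntermediateRings

theorem stmt14_general {X : Type*} [TopologicalSpace X] [CompletelyRegularSpace X]
    (A : Subring C(X, ℝ)) (hA : IsIntermediate A) :
    (∀ f : C(X, ℝ), (ZSet f).Nonempty → (interior (ZSet f)).Nonempty) ↔
      ∀ p : X, IsZoIdeal (fixedMaxIdeal A p) := by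
  constructor
  · intro h p
    refine ⟨fixedMaxIdeal_ne_top p, fun a ha b hb => ?_⟩
    exact hA.closure_interior_zSet_subset (fun _ => mul_eq_zero_of_mem_Pz hb)
      (AlmostPF.mem_closure_interior_zSet h ha)
  · rintro h f ⟨p, hp⟩
    obtain ⟨g, hg, hgf⟩ := exists_bddF_zSet_eq f
    let a : A := ⟨g, hA g hg⟩
    have hap : a ∈ fixedMaxIdeal A p := (hgf.symm ▸ hp : p ∈ ZSet g)
    rw [← hgf, nonempty_iff_ne_empty]
    exact fun hint => (h p).notMem_nonZeroDivisors hap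
      (mem_nonZeroDivisors_of_interior_zSet_eq_empty hint)

/-- A Tychonoff space X is an almost P-space iff every fixed maximal ideal of a ring
A(X) with C*(X) ⊆ A(X) ⊆ C(X) is a z°-ideal. -/
theorem stmt14 {X : Type*} [TopologicalSpace X] [CompletelyRegularSpace X] [T2Space X]
    (A : Subring C(X, ℝ)) (hA : IsIntermediate A) :
    (∀ f : C(X, ℝ), (ZSet f).Nonempty → (interior (ZSet f)).Nonempty) ↔
      ∀ p : X, IsZoIdeal (fixedMaxIdeal A p) :=
  stmt14_general A hA
end

section
/- Let F be a linear ordered field equipped with its order topology and X a completely F-regular space. Then X is an almost P_F-space (every nonempty zero set Z(f) with f ∈ C(X,F) has nonempty interior in X) if and only if every maximal ideal of C(X,F) is a z°-ideal. -/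
/-!
Every minimal prime of a commutative ring consists of zero divisors, and the minimal primes
intersect in the nilradical. In `C(X, F)` this pins `Pz f` down by the interior of `Z(f)`:
if that interior is empty, `f` is a non-zero-divisor and `Pz f` is the whole ring; and by
complete `F`-regularity every `g ∈ Pz f` vanishes on it, since a function `u` that is `1` at a
point of the interior and `0` off it satisfies `u * f = 0`.

So if `f(x) = 0` but `Z(f)` has empty interior, the maximal ideal of functions vanishing at `x`
contains `f` but not `Pz f ∋ 1`. Conversely, for `a` in a maximal ideal `M` and `g ∈ Pz a \ M`,
write `1 = c g + y` with `y ∈ M`. Then `a² + y² ∈ M` is not a unit, so its zero set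
`Z(a) ∩ Z(y)` is nonempty and, in an almost `P_F`-space, has an interior point; there `g`
and `y` both vanish, contradicting `1 = c g + y`.
-/

open Set

section MinimalPrimes

variable {R : Type*} [CommRing R]

/-- The intersection of the minimal primes is the nilradical, so some minimal prime misses
`u * b`; it contains `u * a = 0` but not `u`, hence contains `a` and not `b`. -/
theorem notMem_Pz_of_mul_eq_zero {a b u : R} (hua : u * a = 0) (hub : ¬IsNilpotent (u * b)) :
    b ∉ Pz a := by
  obtain ⟨Q, hQ, hubQ⟩ : ∃ Q ∈ minimalPrimes R, u * b ∉ Q := by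
    rw [← mem_nilradical, nilradical, ← Ideal.sInf_minimalPrimes, Submodule.mem_sInf] at hub
    push Not at hub
    exact hub
  have haQ : a ∈ Q := (hQ.1.1.mem_or_mem (hua ▸ Q.zero_mem)).resolve_left
    fun hu => hubQ (Q.mul_mem_right b hu)
  exact fun hb => hubQ (Q.mul_mem_left u (mem_iInter₂.mp hb Q ⟨hQ, haQ⟩))

end MinimalPrimes

section ContinuousFunctions

variable {X F : Type*} [TopologicalSpace X] [Field F] [LinearOrder F] [IsStrictOrderedRing F]
  [TopologicalSpace F] [OrderTopology F]

theorem ZSet_mul_self_add_mul_self (f g : C(X, F)) :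
    ZSet (f * f + g * g) = ZSet f ∩ ZSet g := by
  ext x
  simp [ZSet, mul_self_add_mul_self_eq_zero]

theorem ZSet_nonempty_of_not_isUnit {f : C(X, F)} (hf : ¬IsUnit f) : (ZSet f).Nonempty := by
  by_contra hempty
  have hne : ∀ x, f x ≠ 0 := fun x hx => hempty ⟨x, hx⟩
  exact hf (IsUnit.of_mul_eq_one ⟨fun x => (f x)⁻¹, f.continuous.inv₀ hne⟩
    (ContinuousMap.ext fun x => mul_inv_cancel₀ (hne x)))

theorem mem_nonZeroDivisors_of_interior_ZSet_eq_empty {f : C(X, F)}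
    (hf : interior (ZSet f) = ∅) : f ∈ nonZeroDivisors C(X, F) := by
  refine mem_nonZeroDivisors_iff_right.mpr fun s hsf => ContinuousMap.coe_injective ?_
  refine Continuous.ext_on (interior_eq_empty_iff_dense_compl.mp hf) s.continuous
    continuous_const fun x hx => ?_
  exact (mul_eq_zero.mp congr($hsf x)).resolve_right hx

theorem isMaximal_ker_evalAlgHom (x : X) :
    (RingHom.ker (ContinuousMap.evalAlgHom F F x)).IsMaximal :=
  RingHom.ker_isMaximal_of_surjective _ fun c => ⟨ContinuousMap.const X c, rfl⟩

theorem CompletelyFRegular.eq_zero_of_mem_Pz (hX : CompletelyFRegular X F) {f g : C(X, F)}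
    (hg : g ∈ Pz f) {x : X} (hx : x ∈ interior (ZSet f)) : g x = 0 := by
  by_contra hgx
  obtain ⟨v, -, hvx, hv⟩ := hX.2 _ isOpen_interior.isClosed_compl x (not_not_intro hx)
  refine notMem_Pz_of_mul_eq_zero (u := 1 - v) ?_ ?_ hg
  · ext y
    by_cases hy : y ∈ interior (ZSet f)
    · simp [show f y = 0 from interior_subset (s := ZSet f) hy]
    · simp [hv y hy]
  · rintro ⟨n, hn⟩
    have := congr($hn x)
    simp [hvx, pow_eq_zero_iff'] at this
    exact hgx this.1

theorem AlmostPF.Pz_subset_of_isMaximal (hX : CompletelyFRegular X F) (hP : AlmostPF X F)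
    {M : Ideal C(X, F)} (hM : M.IsMaximal) {a : C(X, F)} (ha : a ∈ M) :
    Pz a ⊆ (M : Set C(X, F)) := by
  intro g hg
  by_contra hgM
  obtain ⟨c, y, hyM, hcy⟩ := hM.exists_inv hgM
  have hk : a * a + y * y ∈ M := M.add_mem (M.mul_mem_left a ha) (M.mul_mem_left y hyM)
  obtain ⟨p, hp⟩ := hP _ <| ZSet_nonempty_of_not_isUnit fun hu =>
    hM.ne_top (M.eq_top_of_isUnit_mem hk hu)
  rw [ZSet_mul_self_add_mul_self] at hp
  have hgp : g p = 0 := hX.eq_zero_of_mem_Pz hg (interior_mono inter_subset_left hp)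
  have hyp : y p = 0 := (interior_subset hp).2
  simpa [hgp, hyp] using congr($hcy p)

theorem almostPF_of_forall_isMaximal
    (h : ∀ M : Ideal C(X, F), M.IsMaximal → ∀ a ∈ M, Pz a ⊆ (M : Set C(X, F))) :
    AlmostPF X F := by
  rintro f ⟨x, hx⟩
  by_contra hint
  rw [not_nonempty_iff_eq_empty] at hint
  have hPz : Pz f = univ :=
    Pz_eq_univ_of_mem_nonZeroDivisors (mem_nonZeroDivisors_of_interior_ZSet_eq_empty hint)
  have h1 := h _ (isMaximal_ker_evalAlgHom x) f hx (hPz ▸ mem_univ 1)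
  exact one_ne_zero (RingHom.mem_ker.mp h1)

end ContinuousFunctions

/-- X is an almost P_F-space iff every maximal ideal of C(X,F) is a z°-ideal. -/
theorem stmt15 {X F : Type*} [TopologicalSpace X] [Field F] [LinearOrder F] [IsStrictOrderedRing F]
    [TopologicalSpace F] [OrderTopology F]
    (hX : CompletelyFRegular X F) :
    AlmostPF X F ↔
      ∀ M : Ideal C(X, F), M.IsMaximal → ∀ a ∈ M, Pz a ⊆ (M : Set C(X, F)) :=
  ⟨fun hP _ hM _ ha => hP.Pz_subset_of_isMaximal hX hM ha, almostPF_of_forall_isMaximal⟩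
end

section
/- Let F be a linear ordered field equipped with its order topology, X a completely F-regular space, and A(X,F) an intermediate ring. For f ∈ A(X,F), f is a divisor of zero in A(X,F) (there exists g ∈ A(X,F), g ≠ 0, with f·g = 0) if and only if int_X Z(f) ≠ ∅. -/
open Set

/-! If `f * g = 0` with `g ≠ 0`, the nonempty open set `{g ≠ 0}` lies in `Z(f)`. Conversely,
complete regularity yields a bounded `g` equal to `1` at a point of `int Z(f)` and vanishing off
`int Z(f)`; it lies in every intermediate ring and `f * g = 0`. -/

section ZeroDivisor

variable {X R : Type*} [TopologicalSpace X] [TopologicalSpace R]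

theorem interior_zSet_nonempty_of_mul_eq_zero [T1Space R] [MulZeroClass R] [NoZeroDivisors R]
    [ContinuousMul R] {f g : C(X, R)} (hg : g ≠ 0) (hfg : f * g = 0) :
    (interior (ZSet f)).Nonempty := by
  obtain ⟨x, hx⟩ : ∃ x, g x ≠ 0 := by
    by_contra! h
    exact hg (ContinuousMap.ext h)
  have hsupport : {y | g y ≠ 0} ⊆ ZSet f := fun y hy =>
    (mul_eq_zero.mp (DFunLike.congr_fun hfg y)).resolve_right hy
  exact ⟨x, interior_maximal hsupport (isOpen_compl_singleton.preimage g.continuous) hx⟩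

theorem mul_eq_zero_of_eq_zero_off_zSet [MulZeroClass R] [ContinuousMul R] {f g : C(X, R)}
    (hg : ∀ y ∉ ZSet f, g y = 0) : f * g = 0 := by
  ext y
  by_cases hy : y ∈ ZSet f
  · simp [show f y = 0 from hy]
  · simp [hg y hy]

end ZeroDivisor

section CompletelyFRegular

variable {X F : Type*} [TopologicalSpace X] [Field F] [LinearOrder F] [IsStrictOrderedRing F]
  [TopologicalSpace F] [OrderTopology F]

theorem BddF.one_sub {h : C(X, F)} (hh : BddF h) : BddF (1 - h) := by
  obtain ⟨l, hl, hbd⟩ := hh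
  refine ⟨1 + l, by linarith, fun y => ?_⟩
  calc |(1 - h) y| = |1 - h y| := rfl
    _ ≤ |1| + |h y| := abs_sub _ _
    _ ≤ 1 + l := by rw [abs_one]; linarith [hbd y]

theorem CompletelyFRegular.exists_bddF_eq_one_of_isOpen (hX : CompletelyFRegular X F)
    {U : Set X} (hU : IsOpen U) {x : X} (hx : x ∈ U) :
    ∃ g : C(X, F), BddF g ∧ g x = 1 ∧ ∀ y ∉ U, g y = 0 := by
  obtain ⟨h, hb, hx0, hUc⟩ := hX.2 Uᶜ hU.isClosed_compl x (not_not_intro hx)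
  exact ⟨1 - h, hb.one_sub, by simp [hx0], fun y hy => by simp [hUc y hy]⟩

end CompletelyFRegular

/-- f in A(X,F) is a divisor of zero iff int_X Z(f) is nonempty. -/
theorem stmt17 {X F : Type*} [TopologicalSpace X] [Field F] [LinearOrder F] [IsStrictOrderedRing F]
    [TopologicalSpace F] [OrderTopology F]
    (hX : CompletelyFRegular X F)
    (A : Subring C(X, F)) (hA : IsIntermediate A)
    (f : A) :
    (∃ g : A, g ≠ 0 ∧ f * g = 0) ↔ (interior (ZSet (f : C(X, F)))).Nonempty := by
  constructor
  · rintro ⟨g, hg0, hfg⟩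
    exact interior_zSet_nonempty_of_mul_eq_zero (g := (g : C(X, F)))
      (by simpa using hg0) (congrArg Subtype.val hfg)
  · rintro ⟨x, hx⟩
    obtain ⟨g, hgb, hgx, hg⟩ := hX.exists_bddF_eq_one_of_isOpen isOpen_interior hx
    refine ⟨⟨g, hA g hgb⟩, fun h0 => ?_, Subtype.ext ?_⟩
    · simpa [hgx] using DFunLike.congr_fun (congrArg Subtype.val h0) x
    · exact mul_eq_zero_of_eq_zero_off_zSet fun y hy => hg y (fun hy' => hy (interior_subset hy'))
end
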